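/- Let 0 < α < 1, let T > 0 and let the mesh on [0,T] be uniform, i.e. t^n = n·Δt with Δt = T/N. Let v : [0,T] → ℝ be twice continuously differentiable. Then for every 1 ≤ n ≤ N the scaled L1 remainder R^n = r^n/Γ(1−α) satisfies |R^n| ≤ (1/Γ(1−α)) · ( 1/(2(1−α)) + 1/8 ) · Δt^{2−α} · max_{0 ≤ t ≤ t^n} |v''(t)|; in particular R^n = O(Δt^{2−α}). -/

import Mathlib

/-!
Split the remainder into the local errors `∫ (v' - slope) (tⁿ - s)^(-α)` of the mesh intervals.
On the last interval the slope differs from `v'` by at most `Δt M / 2`, which integrates against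
the kernel to `Δt^(2-α) M / (2(1-α))`. On every earlier interval an integration by parts puts the
derivative on the kernel, whose derivative `α (tⁿ - s)^(-α-1)` is positive; the error of linear
interpolation is at most `Δt² M / 8`, and the kernel increments telescope to at most `Δt^(-α)`.
Both pointwise estimates come from first-order Taylor expansions at `s` towards the two endpoints.
-/

open MeasureTheory intervalIntegral Set

theorem abs_sub_sub_deriv_mul_le {v : ℝ → ℝ} (hv : ContDiff ℝ 2 v) {M s x : ℝ}
    (hM : ∀ u ∈ uIcc s x, |deriv (deriv v) u| ≤ M) :
    |v x - v s - deriv v s * (x - s)| ≤ M / 2 * (x - s) ^ 2 := by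
  rcases eq_or_ne s x with rfl | hsx
  · simp
  obtain ⟨ξ, hξ, hrem⟩ :=
    taylor_mean_remainder_lagrange_iteratedDeriv (n := 1) hsx hv.contDiffOn
  have hderiv : derivWithin v (uIcc s x) s = deriv v s :=
    ((hv.differentiable (by norm_num)) s).derivWithin (uniqueDiffOn_uIcc hsx s left_mem_uIcc)
  have htaylor : taylorWithinEval v 1 (uIcc s x) s x = v s + deriv v s * (x - s) := by
    simp [taylorWithinEval_succ, taylor_within_zero_eval, hderiv]
    ring
  rw [htaylor, iteratedDeriv_succ, iteratedDeriv_one] at hrem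
  rw [sub_sub, hrem, abs_div, abs_mul, abs_of_nonneg (sq_nonneg (x - s))]
  have := hM ξ (uIoo_subset_uIcc_self hξ)
  norm_num
  nlinarith [sq_nonneg (x - s)]

section TaylorOnInterval

variable {v : ℝ → ℝ} (hv : ContDiff ℝ 2 v) {a b M : ℝ}
  (hM : ∀ u ∈ Icc a b, |deriv (deriv v) u| ≤ M)
include hv hM

theorem abs_deriv_sub_slope_le (hab : a < b) {s : ℝ} (hs : s ∈ Icc a b) :
    |deriv v s - slope v a b| ≤ M * (b - a) / 2 := by
  have hM0 : 0 ≤ M := (abs_nonneg _).trans (hM a ⟨le_rfl, hab.le⟩)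
  have hRa := abs_sub_sub_deriv_mul_le hv fun u hu ↦
    hM u (uIcc_subset_Icc hs ⟨le_rfl, hab.le⟩ hu)
  have hRb := abs_sub_sub_deriv_mul_le hv fun u hu ↦
    hM u (uIcc_subset_Icc hs ⟨hab.le, le_rfl⟩ hu)
  have hba : 0 < b - a := sub_pos.2 hab
  have key : deriv v s - slope v a b = ((v a - v s - deriv v s * (a - s)) -
      (v b - v s - deriv v s * (b - s))) / (b - a) := by
    rw [slope_def_field]; field_simp; ring
  rw [key, abs_div, abs_of_pos hba, div_le_iff₀ hba]
  calc _ ≤ M / 2 * (a - s) ^ 2 + M / 2 * (b - s) ^ 2 :=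
        (abs_sub _ _).trans (add_le_add hRa hRb)
    _ ≤ M * (b - a) / 2 * (b - a) := by
        nlinarith [mul_nonneg hM0 (mul_nonneg (sub_nonneg.2 hs.1) (sub_nonneg.2 hs.2))]

theorem abs_sub_sub_mul_slope_le (hab : a < b) {s : ℝ} (hs : s ∈ Icc a b) :
    |v s - v a - (s - a) * slope v a b| ≤ M * (b - a) ^ 2 / 8 := by
  have hM0 : 0 ≤ M := (abs_nonneg _).trans (hM a ⟨le_rfl, hab.le⟩)
  have hRa := abs_sub_sub_deriv_mul_le hv fun u hu ↦
    hM u (uIcc_subset_Icc hs ⟨le_rfl, hab.le⟩ hu)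
  have hRb := abs_sub_sub_deriv_mul_le hv fun u hu ↦
    hM u (uIcc_subset_Icc hs ⟨hab.le, le_rfl⟩ hu)
  have hba : 0 < b - a := sub_pos.2 hab
  have hsa : 0 ≤ s - a := sub_nonneg.2 hs.1
  have hbs : 0 ≤ b - s := sub_nonneg.2 hs.2
  -- the first-order terms cancel in this weighted combination of the two Taylor expansions at s
  have key : v s - v a - (s - a) * slope v a b = -((b - s) * (v a - v s - deriv v s * (a - s)) +
      (s - a) * (v b - v s - deriv v s * (b - s))) / (b - a) := by
    rw [slope_def_field]; field_simp; ring
  rw [key, abs_div, abs_neg, abs_of_pos hba, div_le_iff₀ hba]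
  calc _ ≤ (b - s) * (M / 2 * (a - s) ^ 2) + (s - a) * (M / 2 * (b - s) ^ 2) := by
        refine (abs_add_le _ _).trans (add_le_add ?_ ?_) <;>
          rw [abs_mul, abs_of_nonneg (by assumption)] <;> gcongr
    _ = M / 2 * ((s - a) * (b - s)) * (b - a) := by ring
    _ ≤ M * (b - a) ^ 2 / 8 * (b - a) := by
        gcongr; nlinarith [sq_nonneg (a + b - 2 * s)]

end TaylorOnInterval

section Kernel

variable {α : ℝ}

theorem intervalIntegrable_sub_rpow_neg (hα : α < 1) (c a b : ℝ) :
    IntervalIntegrable (fun s ↦ (c - s) ^ (-α)) volume a b := by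
  simpa using
    (intervalIntegrable_rpow' (a := c - a) (b := c - b) (by linarith)).comp_sub_left c

theorem hasDerivAt_sub_rpow_neg (α : ℝ) {c x : ℝ} (hx : x < c) :
    HasDerivAt (fun s ↦ (c - s) ^ (-α)) (α * (c - x) ^ (-α - 1)) x := by
  convert ((hasDerivAt_id' x).const_sub c).rpow_const (p := -α) (Or.inl (sub_pos.2 hx).ne')
    using 1
  ring

theorem integral_sub_rpow_neg (hα : α < 1) (a c : ℝ) :
    ∫ s in a..c, (c - s) ^ (-α) = (c - a) ^ (1 - α) / (1 - α) := by
  rw [integral_comp_sub_left (fun x ↦ x ^ (-α)) c, integral_rpow (Or.inl (by linarith)),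
    sub_self, neg_add_eq_sub, Real.zero_rpow (by linarith), sub_zero]

end Kernel

noncomputable def l1LocalError (v : ℝ → ℝ) (α c a b : ℝ) : ℝ :=
  ∫ s in a..b, (deriv v s - slope v a b) * (c - s) ^ (-α)

section LocalError

variable {v : ℝ → ℝ} (hv : ContDiff ℝ 2 v) {α a b M : ℝ}
  (hM : ∀ u ∈ Icc a b, |deriv (deriv v) u| ≤ M)
include hv hM

theorem abs_l1LocalError_le_of_lt (hα : 0 ≤ α) (hab : a < b) {c : ℝ} (hbc : b < c) :
    |l1LocalError v α c a b| ≤ M * (b - a) ^ 2 / 8 * ((c - b) ^ (-α) - (c - a) ^ (-α)) := by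
  set e : ℝ → ℝ := fun u ↦ v u - v a - (u - a) * slope v a b
  have hv1 : Differentiable ℝ v := hv.differentiable (by norm_num)
  have hv2 : Continuous (deriv v) := hv.continuous_deriv (by norm_num)
  have hKd : ∀ x ∈ uIcc a b,
      HasDerivAt (fun s ↦ (c - s) ^ (-α)) (α * (c - x) ^ (-α - 1)) x :=
    fun x hx ↦ hasDerivAt_sub_rpow_neg α (((uIcc_of_le hab.le) ▸ hx).2.trans_lt hbc)
  have hK'c : ContinuousOn (fun x ↦ α * (c - x) ^ (-α - 1)) (uIcc a b) := by
    refine continuousOn_const.mul (ContinuousOn.rpow_const (by fun_prop) fun x hx ↦ Or.inl ?_)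
    exact (sub_pos.2 (((uIcc_of_le hab.le) ▸ hx).2.trans_lt hbc)).ne'
  have hed : ∀ x ∈ uIcc a b, HasDerivAt e (deriv v x - slope v a b) x := fun x _ ↦
    (((hv1 x).hasDerivAt.sub_const (v a)).sub (((hasDerivAt_id' x).sub_const a).mul_const
      (slope v a b))).congr_deriv (by ring)
  have heb : e b = 0 := by
    simp only [e, slope_def_field]
    field_simp [(sub_pos.2 hab).ne']
    ring
  have hea : e a = 0 := by simp [e]
  have hibp : l1LocalError v α c a b = -∫ x in a..b, α * (c - x) ^ (-α - 1) * e x := by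
    have := integral_mul_deriv_eq_deriv_mul hKd hed hK'c.intervalIntegrable
      ((hv2.sub continuous_const).intervalIntegrable a b)
    rw [hea, heb, mul_zero, mul_zero, sub_zero, zero_sub] at this
    simp_rw [l1LocalError, ← this, mul_comm]
  have he : ∀ x ∈ Ioc a b, ‖α * (c - x) ^ (-α - 1) * e x‖ ≤
      α * (c - x) ^ (-α - 1) * (M * (b - a) ^ 2 / 8) := fun x hx ↦ by
    have hK' : 0 ≤ α * (c - x) ^ (-α - 1) :=
      mul_nonneg hα (Real.rpow_nonneg (by linarith [hx.2]) _)
    rw [norm_mul, Real.norm_of_nonneg hK', Real.norm_eq_abs]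
    exact mul_le_mul_of_nonneg_left
      (abs_sub_sub_mul_slope_le hv hM hab (Ioc_subset_Icc_self hx)) hK'
  rw [hibp, abs_neg, ← Real.norm_eq_abs]
  calc _ ≤ ∫ x in a..b, α * (c - x) ^ (-α - 1) * (M * (b - a) ^ 2 / 8) :=
        norm_integral_le_of_norm_le hab.le (ae_of_all _ he) (hK'c.intervalIntegrable.mul_const _)
    _ = _ := by
        rw [intervalIntegral.integral_mul_const, integral_eq_sub_of_hasDerivAt hKd
          hK'c.intervalIntegrable, mul_comm]

theorem abs_l1LocalError_self_le (hα : α < 1) (hab : a < b) :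
    |l1LocalError v α b a b| ≤ M * (b - a) / 2 * ((b - a) ^ (1 - α) / (1 - α)) := by
  have hbound : ∀ x ∈ Ioc a b, ‖(deriv v x - slope v a b) * (b - x) ^ (-α)‖ ≤
      M * (b - a) / 2 * (b - x) ^ (-α) := fun x hx ↦ by
    have hK : 0 ≤ (b - x) ^ (-α) := Real.rpow_nonneg (by linarith [hx.2]) _
    rw [norm_mul, Real.norm_of_nonneg hK, Real.norm_eq_abs]
    exact mul_le_mul_of_nonneg_right
      (abs_deriv_sub_slope_le hv hM hab (Ioc_subset_Icc_self hx)) hK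
  rw [l1LocalError, ← Real.norm_eq_abs, ← integral_sub_rpow_neg hα,
    ← intervalIntegral.integral_const_mul]
  exact norm_integral_le_of_norm_le hab.le (ae_of_all _ hbound)
    ((intervalIntegrable_sub_rpow_neg hα b a b).const_mul _)

end LocalError

theorem sub_sum_eq_sum_l1LocalError {v : ℝ → ℝ} (hv : Continuous (deriv v)) {α : ℝ}
    (hα : α < 1) (t : ℕ → ℝ) (c : ℝ) (n : ℕ) :
    (∫ s in t 0..t n, deriv v s * (c - s) ^ (-α)) -
        ∑ k ∈ Finset.Icc 1 n, (v (t k) - v (t (k - 1))) / (t k - t (k - 1)) *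
          ∫ s in t (k - 1)..t k, (c - s) ^ (-α) =
      ∑ i ∈ Finset.range n, l1LocalError v α c (t i) (t (i + 1)) := by
  have hK (i : ℕ) := intervalIntegrable_sub_rpow_neg hα c (t i) (t (i + 1))
  have hvK (i : ℕ) := (hK i).continuousOn_mul hv.continuousOn
  rw [← sum_integral_adjacent_intervals fun i _ ↦ hvK i, ← Finset.Ico_add_one_right_eq_Icc,
    Finset.sum_Ico_eq_sum_range, Nat.add_sub_cancel, ← Finset.sum_sub_distrib]
  refine Finset.sum_congr rfl fun i _ ↦ ?_
  rw [add_comm 1 i, Nat.add_sub_cancel, l1LocalError, slope_def_field,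
    ← intervalIntegral.integral_const_mul, ← integral_sub (hvK i) ((hK i).const_mul _)]
  exact integral_congr fun x _ ↦ by ring

theorem abs_sum_l1LocalError_le_of_uniform {v : ℝ → ℝ} (hv : ContDiff ℝ 2 v) {α h M : ℝ}
    (hα0 : 0 ≤ α) (hα1 : α < 1) (hh : 0 < h) {t : ℕ → ℝ} (ht : ∀ m : ℕ, t m = m * h)
    {n : ℕ} (hn : 1 ≤ n) (hM : ∀ u ∈ Icc 0 (t n), |deriv (deriv v) u| ≤ M) :
    |∑ i ∈ Finset.range n, l1LocalError v α (t n) (t i) (t (i + 1))| ≤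
      (1 / (2 * (1 - α)) + 1 / 8) * h ^ (2 - α) * M := by
  obtain ⟨m, rfl⟩ : ∃ m, n = m + 1 := ⟨n - 1, by omega⟩
  have hstep (i : ℕ) : t (i + 1) - t i = h := by rw [ht, ht]; push_cast; ring
  have hmono : StrictMono t := strictMono_nat_of_lt_succ fun i ↦ by linarith [hstep i]
  have ht0 : t 0 = 0 := by simp [ht]
  have hMi {i : ℕ} (hi : i ≤ m) : ∀ u ∈ Icc (t i) (t (i + 1)), |deriv (deriv v) u| ≤ M :=
    fun u hu ↦ hM u ⟨ht0 ▸ (hmono.monotone i.zero_le).trans hu.1,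
      hu.2.trans (hmono.monotone (by omega))⟩
  have hM0 : 0 ≤ M :=
    (abs_nonneg _).trans (hM 0 ⟨le_rfl, ht0 ▸ hmono.monotone (Nat.zero_le _)⟩)
  have hinterior : ∑ i ∈ Finset.range m, |l1LocalError v α (t (m + 1)) (t i) (t (i + 1))| ≤
      M * h ^ 2 / 8 * h ^ (-α) := by
    calc _ ≤ ∑ i ∈ Finset.range m, M * h ^ 2 / 8 *
          ((t (m + 1) - t (i + 1)) ^ (-α) - (t (m + 1) - t i) ^ (-α)) := by
          refine Finset.sum_le_sum fun i hi ↦ ?_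
          have hi := Finset.mem_range.1 hi
          simpa only [hstep] using abs_l1LocalError_le_of_lt hv (hMi hi.le) hα0
            (hmono (Nat.lt_succ_self i)) (hmono (by omega : i + 1 < m + 1))
      _ = M * h ^ 2 / 8 * (h ^ (-α) - t (m + 1) ^ (-α)) := by
          rw [← Finset.mul_sum, Finset.sum_range_sub (fun i ↦ (t (m + 1) - t i) ^ (-α)), hstep,
            ht0, sub_zero]
      _ ≤ M * h ^ 2 / 8 * h ^ (-α) := by
          gcongr
          exact sub_le_self _ (Real.rpow_nonneg (ht0 ▸ hmono.monotone (Nat.zero_le _)) _)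
  have hlast : |l1LocalError v α (t (m + 1)) (t m) (t (m + 1))| ≤
      M * h / 2 * (h ^ (1 - α) / (1 - α)) := by
    simpa only [hstep] using
      abs_l1LocalError_self_le hv (hMi le_rfl) hα1 (hmono (Nat.lt_succ_self m))
  have hpow2 : h ^ 2 * h ^ (-α) = h ^ (2 - α) := by
    rw [← Real.rpow_natCast, ← Real.rpow_add hh]; norm_num; ring_nf
  have hpow1 : h * h ^ (1 - α) = h ^ (2 - α) := by
    rw [show (2 : ℝ) - α = 1 + (1 - α) by ring, Real.rpow_add hh, Real.rpow_one]
  rw [Finset.sum_range_succ]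
  calc _ ≤ ∑ i ∈ Finset.range m, |l1LocalError v α (t (m + 1)) (t i) (t (i + 1))| +
        |l1LocalError v α (t (m + 1)) (t m) (t (m + 1))| :=
        (abs_add_le _ _).trans (add_le_add_left (Finset.abs_sum_le_sum_abs _ _) _)
    _ ≤ M * h ^ 2 / 8 * h ^ (-α) + M * h / 2 * (h ^ (1 - α) / (1 - α)) :=
        add_le_add hinterior hlast
    _ = 1 / 8 * (h ^ 2 * h ^ (-α)) * M + 1 / (2 * (1 - α)) * (h * h ^ (1 - α)) * M := by
        field_simp
    _ = _ := by rw [hpow2, hpow1]; ring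

theorem L1_remainder_bound_uniform_mesh_general
    (α T : ℝ) (hα0 : 0 < α) (hα1 : α < 1) (hT : 0 < T)
    (N : ℕ) (hN : 1 ≤ N)
    (t : ℕ → ℝ) (ht : ∀ m, t m = (m : ℝ) * (T / N))
    (v : ℝ → ℝ) (hv : ContDiff ℝ 2 v)
    (n : ℕ) (hn1 : 1 ≤ n)
    (M : ℝ)
    (hM : IsGreatest ((fun s => |deriv (deriv v) s|) '' Set.Icc 0 (t n)) M) :
    |((∫ s in (0:ℝ)..t n, deriv v s * (t n - s) ^ (-α)) -
        ∑ k ∈ Finset.Icc 1 n,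
          (v (t k) - v (t (k - 1))) / (t k - t (k - 1)) *
            ∫ s in t (k - 1)..t k, (t n - s) ^ (-α)) / Real.Gamma (1 - α)| ≤
      (1 / Real.Gamma (1 - α)) * (1 / (2 * (1 - α)) + 1 / 8) *
        (T / N) ^ (2 - α) * M := by
  have hh : 0 < T / N := div_pos hT (by exact_mod_cast hN)
  have hΓ : 0 < Real.Gamma (1 - α) := Real.Gamma_pos_of_pos (by linarith)
  have hsplit := sub_sum_eq_sum_l1LocalError (hv.continuous_deriv (by norm_num)) hα1 t (t n) n
  have hsum := abs_sum_l1LocalError_le_of_uniform hv hα0.le hα1 hh ht hn1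
    fun u hu ↦ hM.2 ⟨u, hu, rfl⟩
  rw [show t 0 = 0 by simp [ht]] at hsplit
  rw [hsplit, abs_div, abs_of_pos hΓ, div_le_iff₀ hΓ]
  calc _ ≤ (1 / (2 * (1 - α)) + 1 / 8) * (T / N) ^ (2 - α) * M := hsum
    _ = _ := by field_simp

/-- On a uniform mesh `tⁿ = n·Δt`, `Δt = T/N`, the scaled L1 remainder
`Rⁿ = rⁿ/Γ(1−α)` satisfies
`|Rⁿ| ≤ (1/Γ(1−α)) (1/(2(1−α)) + 1/8) Δt^(2−α) max_{0≤s≤tⁿ} |v''(s)|`,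
so `Rⁿ = O(Δt^(2−α))`. -/
theorem L1_remainder_bound_uniform_mesh
    (α T : ℝ) (hα0 : 0 < α) (hα1 : α < 1) (hT : 0 < T)
    (N : ℕ) (hN : 1 ≤ N)
    (t : ℕ → ℝ) (ht : ∀ m, t m = (m : ℝ) * (T / N))
    (v : ℝ → ℝ) (hv : ContDiff ℝ 2 v)
    (n : ℕ) (hn1 : 1 ≤ n) (hnN : n ≤ N)
    (M : ℝ)
    (hM : IsGreatest ((fun s => |deriv (deriv v) s|) '' Set.Icc 0 (t n)) M) :
    |((∫ s in (0:ℝ)..t n, deriv v s * (t n - s) ^ (-α)) -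
        ∑ k ∈ Finset.Icc 1 n,
          (v (t k) - v (t (k - 1))) / (t k - t (k - 1)) *
            ∫ s in t (k - 1)..t k, (t n - s) ^ (-α)) / Real.Gamma (1 - α)| ≤
      (1 / Real.Gamma (1 - α)) * (1 / (2 * (1 - α)) + 1 / 8) *
        (T / N) ^ (2 - α) * M :=
  L1_remainder_bound_uniform_mesh_general α T hα0 hα1 hT N hN t ht v hv n hn1 M hM
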